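/- Fix an integer s ≥ 1 and a function c : ℝ → ℝ. Let β : ℤ × ℝ → ℝ be positive and differentiable in t, satisfying the linear equation ∂_t β(n) = (−1)^s β(n + s) − c(t) β(n) for all n ∈ ℤ. Then v(n) = β(n+1)/β(n) satisfies the s-th flow of the second differential-difference Burgers hierarchy: ∂_t ln v(n) = (−1)^s [ ∏_{j=0}^{s−1} v(n + 1 + j) − ∏_{j=0}^{s−1} v(n + j) ] for all n ∈ ℤ. -/

import Mathlib

/-! Taking logarithms turns `v(n) = β(n+1)/β(n)` into a difference of logarithmic derivatives of
`β`, in which the term `c(t)` cancels; the products of consecutive `v`'s telescope to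
`β(n+s)/β(n)`, which is exactly what the linear equation produces in `∂_t log β(n)`. -/

open Finset

theorem Finset.prod_range_div_shift {G₀ : Type*} [CommGroupWithZero G₀] (f : ℤ → G₀)
    (hf : ∀ m, f m ≠ 0) (n : ℤ) (s : ℕ) :
    ∏ j ∈ range s, f (n + j + 1) / f (n + j) = f (n + s) / f n := by
  induction s with
  | zero => simp [hf n]
  | succ k ih =>
    rw [prod_range_succ, ih, Nat.cast_succ, ← add_assoc, div_mul_div_cancel₀' (hf _)]

theorem HasDerivAt.log_div {f g : ℝ → ℝ} {f' g' x : ℝ} (hf : HasDerivAt f f' x)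
    (hg : HasDerivAt g g' x) (hfx : f x ≠ 0) (hgx : g x ≠ 0) :
    HasDerivAt (fun y => Real.log (f y / g y)) (f' / f x - g' / g x) x := by
  refine ((hf.div hg hgx).log (div_ne_zero hfx hgx)).congr_deriv ?_
  rw [Pi.div_apply]
  field_simp

theorem cole_hopf_burgers_two_general
    (s : ℕ) (c : ℝ → ℝ) (β : ℤ → ℝ → ℝ)
    (hβ : ∀ n t, 0 < β n t)
    (hlin : ∀ n t, HasDerivAt (β n)
      ((-1 : ℝ) ^ s * β (n + (s : ℤ)) t - c t * β n t) t) :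
    let v : ℤ → ℝ → ℝ := fun n t => β (n + 1) t / β n t
    ∀ n t, HasDerivAt (fun y => Real.log (v n y))
      ((-1 : ℝ) ^ s * (∏ j ∈ Finset.range s, v (n + 1 + (j : ℤ)) t
        - ∏ j ∈ Finset.range s, v (n + (j : ℤ)) t)) t := by
  intro v n t
  have hne m : β m t ≠ 0 := (hβ m t).ne'
  have htelescope m : ∏ j ∈ range s, v (m + j) t = β (m + s) t / β m t :=
    prod_range_div_shift (β · t) hne m s
  convert (hlin (n + 1) t).log_div (hlin n t) (hne _) (hne n) using 1
  rw [htelescope, htelescope, add_right_comm n 1]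
  field_simp [hne n, hne (n + 1)]
  ring

/-- The discrete Cole-Hopf transformation `v(n) = β(n+1)/β(n)` linearizes the
second differential-difference Burgers hierarchy. -/
theorem cole_hopf_burgers_two
    (s : ℕ) (hs : 1 ≤ s) (c : ℝ → ℝ) (β : ℤ → ℝ → ℝ)
    (hβ : ∀ n t, 0 < β n t)
    (hlin : ∀ n t, HasDerivAt (β n)
      ((-1 : ℝ) ^ s * β (n + (s : ℤ)) t - c t * β n t) t) :
    let v : ℤ → ℝ → ℝ := fun n t => β (n + 1) t / β n t
    ∀ n t, HasDerivAt (fun y => Real.log (v n y))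
      ((-1 : ℝ) ^ s * (∏ j ∈ Finset.range s, v (n + 1 + (j : ℤ)) t
        - ∏ j ∈ Finset.range s, v (n + (j : ℤ)) t)) t :=
  cole_hopf_burgers_two_general s c β hβ hlin
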